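/- arXiv:2505.07824 — 10 statements merged into one kernel-verified Lean document; each statement's English description precedes it below -/
import Mathlib

section
/- Let T be a bounded operator on a Hilbert space H such that T^n is a partial isometry for every n ≥ 1. Then for all k, l ≥ 0, the initial projections E_k = T^{*k}T^k commute with each other: E_k E_l = E_l E_k. -/
open ContinuousLinearMap

/-- For a power partial isometry `T`, the initial projections
`E k = T^{*k} T^k` commute with each other. -/
theorem initial_projections_commute
    {H : Type*} [NormedAddCommGroup H] [InnerProductSpace ℂ H] [CompleteSpace H]
    (T : H →L[ℂ] H)
    (hT : ∀ n : ℕ, 1 ≤ n → (T ^ n) * adjoint (T ^ n) * (T ^ n) = T ^ n) :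
    ∀ k l : ℕ,
      ((adjoint T) ^ k * T ^ k) * ((adjoint T) ^ l * T ^ l)
        = ((adjoint T) ^ l * T ^ l) * ((adjoint T) ^ k * T ^ k) := by
  have hstar : ∀ n : ℕ, star (T ^ n) = (adjoint T) ^ n := fun n => by
    rw [star_pow, star_eq_adjoint]
  have h' : ∀ n : ℕ, (adjoint T) ^ n * T ^ n * (adjoint T) ^ n = (adjoint T) ^ n := by
    intro n
    rcases Nat.eq_zero_or_pos n with h0 | hpos
    · subst h0; simp
    · have := congrArg star (hT n hpos)
      simpa [star_mul, hstar, ← star_eq_adjoint, mul_assoc] using this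
  have sa : ∀ k : ℕ, star ((adjoint T) ^ k * T ^ k) = (adjoint T) ^ k * T ^ k := by
    intro k
    rw [star_mul, ← hstar, star_star, hstar]
  have key : ∀ k l : ℕ, k ≤ l →
      ((adjoint T) ^ k * T ^ k) * ((adjoint T) ^ l * T ^ l)
        = (adjoint T) ^ l * T ^ l := by
    intro k l hkl
    obtain ⟨m, rfl⟩ := Nat.exists_eq_add_of_le hkl
    have hS : (adjoint T) ^ (k + m) = (adjoint T) ^ k * (adjoint T) ^ m := pow_add _ _ _
    calc ((adjoint T) ^ k * T ^ k) * ((adjoint T) ^ (k + m) * T ^ (k + m))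
        = ((adjoint T) ^ k * T ^ k * (adjoint T) ^ k) * ((adjoint T) ^ m * T ^ (k + m)) := by
          rw [hS]; noncomm_ring
      _ = (adjoint T) ^ k * ((adjoint T) ^ m * T ^ (k + m)) := by rw [h' k]
      _ = (adjoint T) ^ (k + m) * T ^ (k + m) := by rw [hS, mul_assoc]
  have both : ∀ k l : ℕ, k ≤ l →
      ((adjoint T) ^ l * T ^ l) * ((adjoint T) ^ k * T ^ k)
        = (adjoint T) ^ l * T ^ l := by
    intro k l hkl
    have := congrArg star (key k l hkl)
    simp only [star_mul, sa] at this
    exact this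
  intro k l
  rcases le_total k l with h | h
  · rw [key k l h, both k l h]
  · rw [key l k h, both l k h]
end

section
/- Let T be a bounded operator on a Hilbert space H such that T^n is a partial isometry for every n ≥ 1. Then for all k, l ≥ 0, the initial projection E_k = T^{*k}T^k commutes with the final projection F_l = T^l T^{*l}: E_k F_l = F_l E_k. -/
open ContinuousLinearMap

/-- For a power partial isometry `T`, the initial projection `E k = T^{*k} T^k`
commutes with the final projection `F l = T^l T^{*l}`. -/
theorem initial_final_projections_commute
    {H : Type*} [NormedAddCommGroup H] [InnerProductSpace ℂ H] [CompleteSpace H]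
    (T : H →L[ℂ] H)
    (hT : ∀ n : ℕ, 1 ≤ n → (T ^ n) * adjoint (T ^ n) * (T ^ n) = T ^ n) :
    ∀ k l : ℕ,
      ((adjoint T) ^ k * T ^ k) * (T ^ l * (adjoint T) ^ l)
        = (T ^ l * (adjoint T) ^ l) * ((adjoint T) ^ k * T ^ k) := by
  have hT' : ∀ n : ℕ, 1 ≤ n → T ^ n * (star T) ^ n * T ^ n = T ^ n := by
    intro n hn
    have h := hT n hn
    rwa [← star_eq_adjoint, star_pow] at h
  have hT'' : ∀ n : ℕ, 1 ≤ n → (star T) ^ n * T ^ n * (star T) ^ n = (star T) ^ n := by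
    intro n hn
    simpa [star_mul, star_pow, mul_assoc] using congrArg star (hT' n hn)
  obtain ⟨E, hE⟩ : ∃ E : ℕ → (H →L[ℂ] H), ∀ k, E k = (star T) ^ k * T ^ k :=
    ⟨fun k => (star T) ^ k * T ^ k, fun _ => rfl⟩
  have hE_sa : ∀ k, star (E k) = E k := by
    intro k; simp [hE, star_mul, star_pow]
  have hEE : ∀ k, E k * E k = E k := by
    intro k
    rcases Nat.eq_zero_or_pos k with h | h
    · simp [hE, h]
    · rw [hE]
      calc (star T) ^ k * T ^ k * ((star T) ^ k * T ^ k)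
          = (star T) ^ k * (T ^ k * (star T) ^ k * T ^ k) := by
            rw [mul_assoc, ← mul_assoc (T ^ k)]
        _ = (star T) ^ k * T ^ k := by rw [hT' k h]
  have hstep : ∀ k, E k * E (k + 1) = E (k + 1) := by
    intro k
    rcases Nat.eq_zero_or_pos k with h | h
    · simp [hE, h]
    · rw [hE, hE]
      rw [pow_succ (star T) k]
      calc (star T) ^ k * T ^ k * ((star T) ^ k * star T * T ^ (k + 1))
          = ((star T) ^ k * T ^ k * (star T) ^ k) * (star T * T ^ (k + 1)) := by
            simp only [mul_assoc]
        _ = (star T) ^ k * (star T * T ^ (k + 1)) := by rw [hT'' k h]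
        _ = (star T) ^ k * star T * T ^ (k + 1) := by rw [mul_assoc]
  have hnest : ∀ m, 1 ≤ m → E 1 * E m = E m := by
    intro m hm
    induction m with
    | zero => omega
    | succ n ih =>
      rcases Nat.eq_zero_or_pos n with h | h
      · subst h; exact hEE 1
      · rw [← hstep n, ← mul_assoc, ih h]
  have hnest' : ∀ m, 1 ≤ m → E m * E 1 = E m := by
    intro m hm
    have := congrArg star (hnest m hm)
    simpa [star_mul, hE_sa] using this
  -- key: T * E (k+1) = E k * T
  have hkey : ∀ k, T * E (k + 1) = E k * T := by
    intro k
    have hST : star T * T = E 1 := by simp [hE]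
    have e1 : star T * E k * T = E (k + 1) := by
      rw [hE, hE, pow_succ' (star T) k, pow_succ T k]
      simp only [mul_assoc]
    have e2 : E (k + 1) * E 1 = E (k + 1) := hnest' (k + 1) (by omega)
    have e3 : E 1 * E (k + 1) = E (k + 1) := hnest (k + 1) (by omega)
    have hAC : E (k + 1) * star T * (T * E (k + 1)) = E (k + 1) := by
      calc E (k + 1) * star T * (T * E (k + 1))
          = E (k + 1) * (star T * T) * E (k + 1) := by simp only [mul_assoc]
        _ = E (k + 1) := by rw [hST, e2, hEE]
    have hAD : E (k + 1) * star T * (E k * T) = E (k + 1) := by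
      calc E (k + 1) * star T * (E k * T)
          = E (k + 1) * (star T * E k * T) := by simp only [mul_assoc]
        _ = E (k + 1) := by rw [e1, hEE]
    have hBC : star T * E k * (T * E (k + 1)) = E (k + 1) := by
      calc star T * E k * (T * E (k + 1))
          = (star T * E k * T) * E (k + 1) := by simp only [mul_assoc]
        _ = E (k + 1) := by rw [e1, hEE]
    have hBD : star T * E k * (E k * T) = E (k + 1) := by
      calc star T * E k * (E k * T)
          = star T * (E k * E k) * T := by simp only [mul_assoc]
        _ = E (k + 1) := by rw [hEE, e1]
    have hXstar : star (T * E (k + 1) - E k * T)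
        = E (k + 1) * star T - star T * E k := by
      simp [star_sub, star_mul, hE_sa]
    have hX : star (T * E (k + 1) - E k * T) * (T * E (k + 1) - E k * T) = 0 := by
      rw [hXstar, sub_mul, mul_sub, mul_sub, hAC, hAD, hBC, hBD]
      abel
    have := (CStarRing.star_mul_self_eq_zero_iff _).mp hX
    exact sub_eq_zero.mp this
  have hcomm : ∀ l k, E k * T ^ l = T ^ l * E (k + l) := by
    intro l
    induction l with
    | zero => intro k; simp
    | succ n ih =>
      intro k
      have h1 : E k * T ^ (n + 1) = T * (E (k + 1) * T ^ n) := by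
        rw [pow_succ' T n, ← mul_assoc, ← hkey k, mul_assoc]
      rw [h1, ih (k + 1), show k + 1 + n = k + (n + 1) from by omega,
        ← mul_assoc, ← pow_succ' T n]
  intro k l
  rw [← star_eq_adjoint, ← hE k]
  have main : E k * (T ^ l * (star T) ^ l) = T ^ l * E (k + l) * (star T) ^ l := by
    rw [← mul_assoc, hcomm l k]
  have sa : star (T ^ l * E (k + l) * (star T) ^ l)
      = T ^ l * E (k + l) * (star T) ^ l := by
    simp [star_mul, hE_sa, star_pow, mul_assoc]
  calc E k * (T ^ l * (star T) ^ l)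
      = T ^ l * E (k + l) * (star T) ^ l := main
    _ = star (T ^ l * E (k + l) * (star T) ^ l) := sa.symm
    _ = star (E k * (T ^ l * (star T) ^ l)) := by rw [main]
    _ = (T ^ l * (star T) ^ l) * E k := by
        simp [star_mul, hE_sa, star_pow, mul_assoc]
end

section
/- Let T be a bounded operator on a Hilbert space H such that T^n is a partial isometry for every n ≥ 1. Then T E_{k+1} = E_k T for all k ≥ 0, where E_k = T^{*k} T^k. -/
open ContinuousLinearMap

/-- For a power partial isometry `T`, one has `T E_{k+1} = E_k T`,
where `E k = T^{*k} T^k`. -/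
theorem shift_initial_projection
    {H : Type*} [NormedAddCommGroup H] [InnerProductSpace ℂ H] [CompleteSpace H]
    (T : H →L[ℂ] H)
    (hT : ∀ n : ℕ, 1 ≤ n → (T ^ n) * adjoint (T ^ n) * (T ^ n) = T ^ n) :
    ∀ k : ℕ,
      T * ((adjoint T) ^ (k + 1) * T ^ (k + 1))
        = ((adjoint T) ^ k * T ^ k) * T := by
  intro k
  set S := adjoint T with hS
  have hstarT : star T = S := by rw [hS, star_eq_adjoint]
  have hstarS : star S = T := by
    rw [hS, ← star_eq_adjoint, star_star]
  have hstar : ∀ n : ℕ, star (T ^ n) = S ^ n := by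
    intro n; rw [star_pow, hstarT]
  have h : ∀ n : ℕ, 1 ≤ n → T ^ n * S ^ n * T ^ n = T ^ n := by
    intro n hn
    have := hT n hn
    rwa [← star_eq_adjoint, hstar] at this
  have hP : ∀ n : ℕ, 1 ≤ n → (S ^ n * T ^ n) * (S ^ n * T ^ n) = S ^ n * T ^ n := by
    intro n hn
    calc (S ^ n * T ^ n) * (S ^ n * T ^ n) = S ^ n * (T ^ n * S ^ n * T ^ n) := by
          simp only [mul_assoc]
      _ = S ^ n * T ^ n := by rw [h n hn]
  have h1 : T * S * T = T := by simpa using h 1 (le_refl 1)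
  have hP1k : (S * T) * (S ^ (k+1) * T ^ (k+1)) = S ^ (k+1) * T ^ (k+1) := by
    have hTk : T ^ (k+1) * (S * T) = T ^ (k+1) := by
      calc T ^ (k+1) * (S * T) = T ^ k * (T * S * T) := by
            rw [pow_succ]; simp only [mul_assoc]
        _ = T ^ (k+1) := by rw [h1, pow_succ]
    have hPk1 : (S ^ (k+1) * T ^ (k+1)) * (S * T) = S ^ (k+1) * T ^ (k+1) := by
      calc (S ^ (k+1) * T ^ (k+1)) * (S * T)
          = S ^ (k+1) * (T ^ (k+1) * (S * T)) := by simp only [mul_assoc]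
        _ = S ^ (k+1) * T ^ (k+1) := by rw [hTk]
    have := congrArg star hPk1
    simpa [star_mul, hstar, hstarT, hstarS, star_pow, mul_assoc] using this
  have hSPT : S * (S ^ k * T ^ k) * T = S ^ (k+1) * T ^ (k+1) := by
    rw [pow_succ' S, pow_succ T]; simp only [mul_assoc]
  set A := T * (S ^ (k+1) * T ^ (k+1)) - (S ^ k * T ^ k) * T with hA
  have key : star A * A = 0 := by
    have hstarA : star A = (S ^ (k+1) * T ^ (k+1)) * S - S * (S ^ k * T ^ k) := by
      rw [hA, star_sub, star_mul, star_mul, star_mul, star_mul, hstar, hstar, star_pow,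
        star_pow, hstarT, hstarS]
    have e1 : (S ^ (k+1) * T ^ (k+1)) * S * (T * (S ^ (k+1) * T ^ (k+1)))
        = S ^ (k+1) * T ^ (k+1) := by
      calc (S ^ (k+1) * T ^ (k+1)) * S * (T * (S ^ (k+1) * T ^ (k+1)))
          = (S ^ (k+1) * T ^ (k+1)) * ((S * T) * (S ^ (k+1) * T ^ (k+1))) := by
            simp only [mul_assoc]
        _ = (S ^ (k+1) * T ^ (k+1)) * (S ^ (k+1) * T ^ (k+1)) := by rw [hP1k]
        _ = _ := hP (k+1) (by omega)
    have e2 : (S ^ (k+1) * T ^ (k+1)) * S * ((S ^ k * T ^ k) * T)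
        = S ^ (k+1) * T ^ (k+1) := by
      calc (S ^ (k+1) * T ^ (k+1)) * S * ((S ^ k * T ^ k) * T)
          = (S ^ (k+1) * T ^ (k+1)) * (S * (S ^ k * T ^ k) * T) := by
            simp only [mul_assoc]
        _ = (S ^ (k+1) * T ^ (k+1)) * (S ^ (k+1) * T ^ (k+1)) := by rw [hSPT]
        _ = _ := hP (k+1) (by omega)
    have e3 : S * (S ^ k * T ^ k) * (T * (S ^ (k+1) * T ^ (k+1)))
        = S ^ (k+1) * T ^ (k+1) := by
      calc S * (S ^ k * T ^ k) * (T * (S ^ (k+1) * T ^ (k+1)))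
          = (S * (S ^ k * T ^ k) * T) * (S ^ (k+1) * T ^ (k+1)) := by
            simp only [mul_assoc]
        _ = (S ^ (k+1) * T ^ (k+1)) * (S ^ (k+1) * T ^ (k+1)) := by rw [hSPT]
        _ = _ := hP (k+1) (by omega)
    have e4 : S * (S ^ k * T ^ k) * ((S ^ k * T ^ k) * T)
        = S ^ (k+1) * T ^ (k+1) := by
      rcases Nat.eq_zero_or_pos k with hk | hk
      · subst hk; simp only [pow_zero] at hSPT ⊢; simp only [one_mul, mul_one] at hSPT ⊢; exact hSPT
      · calc S * (S ^ k * T ^ k) * ((S ^ k * T ^ k) * T)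
            = S * ((S ^ k * T ^ k) * (S ^ k * T ^ k)) * T := by simp only [mul_assoc]
          _ = S * (S ^ k * T ^ k) * T := by rw [hP k hk]
          _ = _ := hSPT
    rw [hstarA, hA, sub_mul, mul_sub, mul_sub, e1, e2, e3, e4]
    simp
  have hA0 : A = 0 := by
    rwa [CStarRing.star_mul_self_eq_zero_iff] at key
  have := sub_eq_zero.mp (hA ▸ hA0)
  simpa [hS] using this
end

section
/- Let T be a bounded operator on a Hilbert space H such that T^n is a partial isometry for every n ≥ 1. Then T F_k = F_{k+1} T for all k ≥ 0, where F_k = T^k T^{*k}. -/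
open ContinuousLinearMap

/-- For a power partial isometry `T`, one has `T F_k = F_{k+1} T`,
where `F k = T^k T^{*k}`. -/
theorem shift_final_projection
    {H : Type*} [NormedAddCommGroup H] [InnerProductSpace ℂ H] [CompleteSpace H]
    (T : H →L[ℂ] H)
    (hT : ∀ n : ℕ, 1 ≤ n → (T ^ n) * adjoint (T ^ n) * (T ^ n) = T ^ n) :
    ∀ k : ℕ,
      T * (T ^ k * (adjoint T) ^ k)
        = (T ^ (k + 1) * (adjoint T) ^ (k + 1)) * T := by
  intro k
  have hstar : ∀ n : ℕ, adjoint (T ^ n) = (star T) ^ n := by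
    intro n
    rw [← ContinuousLinearMap.star_eq_adjoint, star_pow]
  have hadj : adjoint T = star T := (ContinuousLinearMap.star_eq_adjoint T).symm
  -- key identities, right-associated with an arbitrary tail
  have h1 : ∀ X : H →L[ℂ] H, T * (star T * (T * X)) = T * X := by
    intro X
    have h := hT 1 le_rfl
    rw [hstar] at h
    simp only [pow_one] at h
    rw [← mul_assoc, ← mul_assoc, h]
  have hk : ∀ X : H →L[ℂ] H,
      T ^ k * ((star T) ^ k * (T ^ k * X)) = T ^ k * X := by
    intro X
    rcases Nat.eq_zero_or_pos k with rfl | hk0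
    · simp
    · have h := hT k hk0
      rw [hstar] at h
      rw [← mul_assoc, ← mul_assoc, h]
  have hk1 : ∀ X : H →L[ℂ] H,
      T ^ (k+1) * ((star T) ^ (k+1) * (T ^ (k+1) * X)) = T ^ (k+1) * X := by
    intro X
    have h := hT (k+1) (Nat.le_add_left 1 k)
    rw [hstar] at h
    rw [← mul_assoc, ← mul_assoc, h]
  have hAA : (T ^ (k+1) * (star T) ^ k) * star (T ^ (k+1) * (star T) ^ k)
      = T ^ (k+1) * (star T) ^ (k+1) := by
    simp only [star_mul, star_pow, star_star]
    conv_lhs => rw [pow_succ' T k]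
    simp only [mul_assoc]
    rw [hk ((star T) ^ (k+1)), ← mul_assoc, ← pow_succ']
  have hAB : (T ^ (k+1) * (star T) ^ k)
        * star (T ^ (k+1) * (star T) ^ (k+1) * T)
      = T ^ (k+1) * (star T) ^ (k+1) := by
    simp only [star_mul, star_pow, star_star]
    simp only [mul_assoc]
    rw [← mul_assoc ((star T) ^ k) (star T), ← pow_succ, hk1 ((star T) ^ (k+1))]
  have hBA : (T ^ (k+1) * (star T) ^ (k+1) * T)
        * star (T ^ (k+1) * (star T) ^ k)
      = T ^ (k+1) * (star T) ^ (k+1) := by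
    simp only [star_mul, star_pow, star_star]
    simp only [mul_assoc]
    rw [← mul_assoc T (T ^ k), ← pow_succ', hk1 ((star T) ^ (k+1))]
  have hmid : T * (star T * (T ^ (k+1) * (star T) ^ (k+1)))
      = T ^ (k+1) * (star T) ^ (k+1) := by
    rw [pow_succ' T k]
    simp only [mul_assoc]
    rw [h1]
  have hBB : (T ^ (k+1) * (star T) ^ (k+1) * T)
        * star (T ^ (k+1) * (star T) ^ (k+1) * T)
      = T ^ (k+1) * (star T) ^ (k+1) := by
    simp only [star_mul, star_pow, star_star]
    simp only [mul_assoc]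
    rw [hmid, hk1 ((star T) ^ (k+1))]
  have key : ((T ^ (k+1) * (star T) ^ k) - (T ^ (k+1) * (star T) ^ (k+1) * T))
      * star ((T ^ (k+1) * (star T) ^ k) - (T ^ (k+1) * (star T) ^ (k+1) * T))
      = 0 := by
    rw [star_sub, mul_sub, sub_mul, sub_mul, hAA, hAB, hBA, hBB]
    abel
  have hz := (CStarRing.mul_star_self_eq_zero_iff _).mp key
  have hfin : T ^ (k+1) * (star T) ^ k = T ^ (k+1) * (star T) ^ (k+1) * T :=
    sub_eq_zero.mp hz
  rw [hadj, ← mul_assoc, ← pow_succ']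
  exact hfin
end

section
/- Let E and E* be Hilbert spaces and let (θ_m)_{m≥0} be partial isometries in B(E, E*) such that for every a ∈ E, the sum ∑_{m=0}^∞ ‖θ_m a‖² ≤ ‖a‖². Then θ_j θ_i* = 0 on E* for all i ≠ j. -/
open ContinuousLinearMap

/-! Taking adjoints in `θᵢ θᵢ* θᵢ = θᵢ` gives `θᵢ* θᵢ θᵢ* = θᵢ*`, so `θᵢ` is isometric on the
range of `θᵢ*`. For `a = θᵢ* z` the single term `‖θᵢ a‖² = ‖a‖²` already exhausts the bound
`‖a‖²`, which leaves no room for `‖θⱼ a‖²`; hence `θⱼ θᵢ* z = 0`. -/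

open scoped InnerProduct

namespace ContinuousLinearMap

variable {𝕜 E F : Type*} [RCLike 𝕜]
  [NormedAddCommGroup E] [InnerProductSpace 𝕜 E] [CompleteSpace E]
  [NormedAddCommGroup F] [InnerProductSpace 𝕜 F] [CompleteSpace F]

theorem adjoint_comp_comp_adjoint_of_comp_adjoint_comp {T : E →L[𝕜] F}
    (hT : T ∘L T† ∘L T = T) : T† ∘L T ∘L T† = T† := by
  simpa [comp_assoc] using congrArg adjoint hT

theorem norm_apply_adjoint_apply_of_comp_adjoint_comp {T : E →L[𝕜] F}
    (hT : T ∘L T† ∘L T = T) (z : F) : ‖T ((T†) z)‖ = ‖(T†) z‖ := by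
  have hfix : (T† ∘L T) ((T†) z) = (T†) z :=
    congrArg (· z) (adjoint_comp_comp_adjoint_of_comp_adjoint_comp hT)
  rw [← sq_eq_sq₀ (norm_nonneg _) (norm_nonneg _), apply_norm_sq_eq_inner_adjoint_left, hfix,
    inner_self_eq_norm_sq]

end ContinuousLinearMap

/-- If `(θ m)` are partial isometries whose squared norms sum contractively
(`∑ ‖θ m a‖² ≤ ‖a‖²` for every `a`), then `θ j θ i ^* = 0` for `i ≠ j`. -/
theorem partial_isometry_coeff_orth_right
    {E F : Type*} [NormedAddCommGroup E] [InnerProductSpace ℂ E] [CompleteSpace E]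
    [NormedAddCommGroup F] [InnerProductSpace ℂ F] [CompleteSpace F]
    (θ : ℕ → E →L[ℂ] F)
    (hpi : ∀ m : ℕ, θ m ∘L adjoint (θ m) ∘L θ m = θ m)
    (hcontr : ∀ (a : E) (N : ℕ), ∑ m ∈ Finset.range N, ‖θ m a‖ ^ 2 ≤ ‖a‖ ^ 2) :
    ∀ i j : ℕ, i ≠ j → θ j ∘L adjoint (θ i) = 0 := by
  intro i j hij
  ext z
  set a := adjoint (θ i) z
  have hpair : ‖θ i a‖ ^ 2 + ‖θ j a‖ ^ 2 ≤ ‖a‖ ^ 2 :=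
    (Finset.add_le_sum (fun m _ ↦ by positivity)
      (Finset.mem_range_succ_iff.2 (le_max_left i j))
      (Finset.mem_range_succ_iff.2 (le_max_right i j)) hij).trans (hcontr a _)
  have hisom : ‖θ i a‖ = ‖a‖ := norm_apply_adjoint_apply_of_comp_adjoint_comp (hpi i) z
  have hzero : ‖θ j a‖ ^ 2 = 0 := le_antisymm (by rw [hisom] at hpair; linarith) (by positivity)
  simpa using hzero
end

section
/- Let (θ_m)_{m≥1} be partial isometries in B(E, E*) with θ_i* θ_j = 0 and θ_j θ_i* = 0 for all i ≠ j, and suppose ∑_{m≥1} θ_m* θ_m ≤ I. Let T_Θ : H²_E → H²_{E*} be the analytic Toeplitz (multiplication) operator with symbol Θ(z) = ∑_{m≥1} θ_m z^m. Then for f = ∑_{n≥0} a_n z^n ∈ H²_{E*}, one has (I − T_Θ T_Θ*) f = a_0 + ∑_{n≥1} (I − ∑_{m=1}^n θ_m θ_m*) a_n z^n. -/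
/-! In the `m`-th summand of the `n`-th coefficient of `T_Θ T_Θ^* f`, `θ m` is applied to
`(T_Θ^* f)_{n-m} = ∑_{l ≥ 1} θ l^* a_{n-m+l}`; since `θ m θ l^* = 0` for `l ≠ m`, only the
term `l = m` survives, leaving `θ m θ m^* a_n`. The series may be pulled through `θ m` because
its terms lie in the mutually orthogonal ranges of the contractions `θ l^*` and have
square-summable norms. -/

open ContinuousLinearMap

theorem norm_le_one_of_sum_norm_sq_le {𝕜 E F : Type*} [NontriviallyNormedField 𝕜]
    [SeminormedAddCommGroup E] [SeminormedAddCommGroup F] [NormedSpace 𝕜 E] [NormedSpace 𝕜 F]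
    {θ : ℕ → E →L[𝕜] F} (hθ : ∀ (a : E) (N : ℕ), ∑ m ∈ Finset.Icc 1 N, ‖θ m a‖ ^ 2 ≤ ‖a‖ ^ 2)
    {k : ℕ} (hk : 1 ≤ k) : ‖θ k‖ ≤ 1 :=
  (θ k).opNorm_le_bound zero_le_one fun a => by
    rw [one_mul]
    refine (pow_le_pow_iff_left₀ (norm_nonneg _) (norm_nonneg _) two_ne_zero).1 ?_
    exact (Finset.single_le_sum (f := fun m => ‖θ m a‖ ^ 2) (fun _ _ => by positivity)
      (Finset.mem_Icc.2 ⟨hk, le_rfl⟩)).trans (hθ a k)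

section InnerProductSpace

variable {ι 𝕜 E F : Type*} [RCLike 𝕜] [NormedAddCommGroup E] [InnerProductSpace 𝕜 E]
  [NormedAddCommGroup F] [InnerProductSpace 𝕜 F] [CompleteSpace F]

theorem summable_of_pairwise_inner_eq_zero {g : ι → F}
    (horth : Pairwise fun i j => inner 𝕜 (g i) (g j) = 0)
    (hsq : Summable fun i => ‖g i‖ ^ 2) : Summable g := by
  have hV : OrthogonalFamily 𝕜 (fun i => 𝕜 ∙ g i) fun i => (𝕜 ∙ g i).subtypeₗᵢ :=
    OrthogonalFamily.of_pairwise fun i j hij =>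
      Submodule.isOrtho_span.2 fun u hu v hv => by
        rw [Set.mem_singleton_iff.1 hu, Set.mem_singleton_iff.1 hv]
        exact horth hij
  exact (hV.summable_iff_norm_sq_summable
    fun i => ⟨g i, Submodule.mem_span_singleton_self (g i)⟩).2 hsq

theorem summable_apply_of_adjoint_comp_eq_zero [CompleteSpace E] {A : ι → E →L[𝕜] F}
    (horth : Pairwise fun i j => adjoint (A i) ∘L A j = 0) {C : ℝ} (hA : ∀ i, ‖A i‖ ≤ C)
    {b : ι → E} (hb : Summable fun i => ‖b i‖ ^ 2) : Summable fun i => A i (b i) := by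
  refine summable_of_pairwise_inner_eq_zero (𝕜 := 𝕜) (fun i j hij => ?_) ?_
  · dsimp only
    rw [← adjoint_inner_right, ← comp_apply, horth hij, zero_apply, inner_zero_right]
  · refine (hb.mul_left (C ^ 2)).of_nonneg_of_le (fun i => by positivity) fun i => ?_
    rw [← mul_pow]
    exact pow_le_pow_left₀ (norm_nonneg _)
      (((A i).le_opNorm (b i)).trans (mul_le_mul_of_nonneg_right (hA i) (norm_nonneg _))) 2

variable [CompleteSpace E] {θ : ℕ → E →L[𝕜] F}

theorem apply_tsum_adjoint_apply_eq
    (horth : ∀ i j : ℕ, 1 ≤ i → 1 ≤ j → i ≠ j → θ j ∘L adjoint (θ i) = 0)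
    (hcontr : ∀ (a : E) (N : ℕ), ∑ m ∈ Finset.Icc 1 N, ‖θ m a‖ ^ 2 ≤ ‖a‖ ^ 2)
    {b : ℕ → F} (hb : Summable fun l => ‖b l‖ ^ 2) {m : ℕ} (hm : 1 ≤ m) :
    θ m (∑' l, adjoint (θ (l + 1)) (b l)) = θ m (adjoint (θ m) (b (m - 1))) := by
  have hsum : Summable fun l => adjoint (θ (l + 1)) (b l) := by
    refine summable_apply_of_adjoint_comp_eq_zero (fun i j hij => ?_) (C := 1) (fun l => ?_) hb
    · dsimp only
      rw [adjoint_adjoint]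
      exact horth (j + 1) (i + 1) (by omega) (by omega) (by omega)
    · rw [LinearIsometryEquiv.norm_map]
      exact norm_le_one_of_sum_norm_sq_le hcontr (by omega)
  rw [(θ m).map_tsum hsum, tsum_eq_single (m - 1) fun l hl => ?_, Nat.sub_add_cancel hm]
  rw [← comp_apply, horth (l + 1) m (by omega) hm (by omega), zero_apply]

end InnerProductSpace

theorem defect_operator_formula_general
    {E F : Type*} [NormedAddCommGroup E] [InnerProductSpace ℂ E] [CompleteSpace E]
    [NormedAddCommGroup F] [InnerProductSpace ℂ F] [CompleteSpace F]
    (θ : ℕ → E →L[ℂ] F)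
    (horth2 : ∀ i j : ℕ, 1 ≤ i → 1 ≤ j → i ≠ j → θ j ∘L adjoint (θ i) = 0)
    (hcontr : ∀ (a : E) (N : ℕ), ∑ m ∈ Finset.Icc 1 N, ‖θ m a‖ ^ 2 ≤ ‖a‖ ^ 2)
    (f : ℕ → F) (hf : Memℓp f 2) :
    ∀ n : ℕ,
      f n - ∑ m ∈ Finset.Icc 1 n,
          θ m (∑' l : ℕ, adjoint (θ (l + 1)) (f (n - m + (l + 1))))
        = f n - ∑ m ∈ Finset.Icc 1 n, θ m (adjoint (θ m) (f n)) := by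
  have hfsq : Summable fun i => ‖f i‖ ^ 2 := by
    simpa using (memℓp_gen_iff (by norm_num)).1 hf
  intro n
  refine congrArg (f n - ·) (Finset.sum_congr rfl fun m hm => ?_)
  obtain ⟨hm1, hmn⟩ := Finset.mem_Icc.1 hm
  have hshift : Summable fun l => ‖f (n - m + (l + 1))‖ ^ 2 :=
    hfsq.comp_injective fun a b h => by omega
  rw [apply_tsum_adjoint_apply_eq horth2 hcontr hshift hm1]
  congr 3
  omega

/-- For `Θ(z) = ∑_{m ≥ 1} θ m z^m` with partially isometric coefficients having
mutually orthogonal ranges and initial spaces and `∑_{m ≥ 1} θ m^* θ m ≤ I`, the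
operator `I - T_Θ T_Θ^*` acts on `f = ∑ a_n z^n ∈ H²_{E_*}` (identified with its
coefficient sequence, square summable) by
`(I - T_Θ T_Θ^*) f = a_0 + ∑_{n ≥ 1} (I - ∑_{m=1}^n θ m θ m^*) a_n z^n`, where the
`n`-th Taylor coefficient of `T_Θ T_Θ^* f` is
`∑_{m=1}^n θ m ((T_Θ^* f)_{n-m})` and `(T_Θ^* f)_j = ∑_{l ≥ 1} θ l^* a_{j+l}`. -/
theorem defect_operator_formula
    {E F : Type*} [NormedAddCommGroup E] [InnerProductSpace ℂ E] [CompleteSpace E]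
    [NormedAddCommGroup F] [InnerProductSpace ℂ F] [CompleteSpace F]
    (θ : ℕ → E →L[ℂ] F)
    (hpi : ∀ m : ℕ, 1 ≤ m → θ m ∘L adjoint (θ m) ∘L θ m = θ m)
    (horth1 : ∀ i j : ℕ, 1 ≤ i → 1 ≤ j → i ≠ j → adjoint (θ i) ∘L θ j = 0)
    (horth2 : ∀ i j : ℕ, 1 ≤ i → 1 ≤ j → i ≠ j → θ j ∘L adjoint (θ i) = 0)
    (hcontr : ∀ (a : E) (N : ℕ), ∑ m ∈ Finset.Icc 1 N, ‖θ m a‖ ^ 2 ≤ ‖a‖ ^ 2)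
    (f : ℕ → F) (hf : Memℓp f 2) :
    ∀ n : ℕ,
      f n - ∑ m ∈ Finset.Icc 1 n,
          θ m (∑' l : ℕ, adjoint (θ (l + 1)) (f (n - m + (l + 1))))
        = f n - ∑ m ∈ Finset.Icc 1 n, θ m (adjoint (θ m) (f n)) :=
  defect_operator_formula_general θ horth2 hcontr f hf
end

section
/- Let T be a power partial isometry on H with truncated shift part T_k = T restricted to H_k (the index-k truncated shift summand in the Halmos–Wallen decomposition). Then the defect space D_{T_k} = range(I − T_k* T_k) equals the range of (E_0 − E_1)(F_{k−1} − F_k), and D_{T_k*} equals the range of (E_{k−1} − E_k)(F_0 − F_1), where E_j = T^{*j}T^j and F_j = T^j T^{*j}. -/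
open ContinuousLinearMap

section CstarPart

variable {A : Type*} [NormedRing A] [StarRing A] [CStarRing A]

lemma pi_comm {a b : A} (ha : a * star a * a = a) (hb : b * star b * b = b)
    (hab : (a * b) * star (a * b) * (a * b) = a * b) :
    (star a * a) * (b * star b) = (b * star b) * (star a * a) := by
  have hp : star a * a * (star a * a) = star a * a := by
    calc star a * a * (star a * a) = star a * (a * star a * a) := by noncomm_ring
      _ = star a * a := by rw [ha]
  have hq : b * star b * (b * star b) = b * star b := by
    calc b * star b * (b * star b) = (b * star b * b) * star b := by noncomm_ring
      _ = b * star b := by rw [hb]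
  have h1 : star a * a * (b * star b) * (star a * a * (b * star b))
      = star a * a * (b * star b) := by
    have h := congrArg (fun x => star a * x * star b) hab
    simp only [star_mul] at h
    calc star a * a * (b * star b) * (star a * a * (b * star b))
        = star a * (a * b * (star b * star a) * (a * b)) * star b := by noncomm_ring
      _ = star a * (a * b) * star b := h
      _ = star a * a * (b * star b) := by noncomm_ring
  have h2 : b * star b * (star a * a) * (b * star b) * (star a * a * (b * star b))
      = b * star b * (star a * a) * (b * star b) := by
    calc b * star b * (star a * a) * (b * star b) * (star a * a * (b * star b))
        = b * star b * (star a * a * (b * star b) * (star a * a * (b * star b))) := by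
          noncomm_ring
      _ = b * star b * (star a * a * (b * star b)) := by rw [h1]
      _ = b * star b * (star a * a) * (b * star b) := by noncomm_ring
  have hX : (1 - b * star b) * (star a * a * (b * star b)) = 0 := by
    rw [← CStarRing.star_mul_self_eq_zero_iff]
    have hstar : star ((1 - b * star b) * (star a * a * (b * star b)))
        = b * star b * (star a * a) * (1 - b * star b) := by
      simp only [star_mul, star_sub, star_one, star_star]
    rw [hstar]
    have expand : b * star b * (star a * a) * (1 - b * star b) *
          ((1 - b * star b) * (star a * a * (b * star b)))
        = b * star b * (star a * a * (star a * a)) * (b * star b)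
          - b * star b * (star a * a) * (b * star b) * (star a * a * (b * star b))
          - b * star b * (star a * a) * (b * star b) * (star a * a * (b * star b))
          + b * star b * (star a * a) * (b * star b * (b * star b))
              * (star a * a * (b * star b)) := by
      noncomm_ring
    rw [expand]
    simp only [hp, hq, h2]
    abel
  have e1 : star a * a * (b * star b) = b * star b * (star a * a * (b * star b)) := by
    have h : star a * a * (b * star b) - b * star b * (star a * a * (b * star b))
        = (1 - b * star b) * (star a * a * (b * star b)) := by noncomm_ring
    rw [hX] at h
    exact sub_eq_zero.mp h
  have e2 : b * star b * (star a * a) = b * star b * (star a * a) * (b * star b) := by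
    have h := congrArg star e1
    simp only [star_mul, star_star] at h
    exact h
  calc star a * a * (b * star b) = b * star b * (star a * a * (b * star b)) := e1
    _ = b * star b * (star a * a) * (b * star b) := by noncomm_ring
    _ = b * star b * (star a * a) := e2.symm

variable (T : A) (hT : ∀ n : ℕ, T ^ n * (star T) ^ n * T ^ n = T ^ n)

include hT

lemma spi (n : ℕ) : (star T) ^ n * T ^ n * (star T) ^ n = (star T) ^ n := by
  have h := congrArg star (hT n)
  simpa only [star_mul, star_pow, star_star, mul_assoc] using h

lemma e_mul_e {m n : ℕ} (h : m ≤ n) :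
    ((star T) ^ m * T ^ m) * ((star T) ^ n * T ^ n) = (star T) ^ n * T ^ n := by
  obtain ⟨d, rfl⟩ := Nat.exists_eq_add_of_le h
  calc ((star T) ^ m * T ^ m) * ((star T) ^ (m + d) * T ^ (m + d))
      = ((star T) ^ m * T ^ m * (star T) ^ m) * ((star T) ^ d * T ^ (m + d)) := by
        rw [pow_add (star T) m d]; noncomm_ring
    _ = (star T) ^ m * ((star T) ^ d * T ^ (m + d)) := by rw [spi T hT m]
    _ = (star T) ^ (m + d) * T ^ (m + d) := by rw [pow_add (star T) m d]; noncomm_ring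

lemma f_mul_f {m n : ℕ} (h : m ≤ n) :
    (T ^ m * (star T) ^ m) * (T ^ n * (star T) ^ n) = T ^ n * (star T) ^ n := by
  obtain ⟨d, rfl⟩ := Nat.exists_eq_add_of_le h
  calc (T ^ m * (star T) ^ m) * (T ^ (m + d) * (star T) ^ (m + d))
      = (T ^ m * (star T) ^ m * T ^ m) * (T ^ d * (star T) ^ (m + d)) := by
        rw [pow_add T m d]; noncomm_ring
    _ = T ^ m * (T ^ d * (star T) ^ (m + d)) := by rw [hT m]
    _ = T ^ (m + d) * (star T) ^ (m + d) := by rw [pow_add T m d]; noncomm_ring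

lemma ef_comm (m n : ℕ) :
    ((star T) ^ m * T ^ m) * (T ^ n * (star T) ^ n)
      = (T ^ n * (star T) ^ n) * ((star T) ^ m * T ^ m) := by
  have ha : T ^ m * star (T ^ m) * T ^ m = T ^ m := by
    rw [star_pow]; exact hT m
  have hb : T ^ n * star (T ^ n) * T ^ n = T ^ n := by
    rw [star_pow]; exact hT n
  have hab : (T ^ m * T ^ n) * star (T ^ m * T ^ n) * (T ^ m * T ^ n) = T ^ m * T ^ n := by
    rw [← pow_add, star_pow]; exact hT (m + n)
  simpa only [star_pow] using pi_comm ha hb hab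

end CstarPart

section Main

variable {A : Type*} [NormedRing A] [StarRing A] [CStarRing A]
variable (T : A) (hT : ∀ n : ℕ, T ^ n * (star T) ^ n * T ^ n = T ^ n)

include hT

lemma main1 (k : ℕ) (hk : 1 ≤ k) :
    (1 - star T * T) *
        ∑ n ∈ Finset.Icc 1 k,
          ((star T) ^ (k - n) * T ^ (k - n) - (star T) ^ (k - n + 1) * T ^ (k - n + 1)) *
            (T ^ (n - 1) * (star T) ^ (n - 1) - T ^ n * (star T) ^ n)
      = (1 - star T * T) * (T ^ (k - 1) * (star T) ^ (k - 1) - T ^ k * (star T) ^ k) := by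
  have hE : star T * T * (star T * T) = star T * T := by
    simpa only [pow_one] using e_mul_e T hT (le_refl 1)
  rw [Finset.mul_sum, Finset.sum_eq_single_of_mem k (Finset.mem_Icc.mpr ⟨hk, le_refl k⟩)]
  · simp only [Nat.sub_self, pow_zero, zero_add, pow_one, one_mul]
    rw [← mul_assoc]
    congr 1
    calc (1 - star T * T) * (1 - star T * T)
        = 1 - star T * T - star T * T + star T * T * (star T * T) := by noncomm_ring
      _ = 1 - star T * T := by rw [hE]; abel
  · intro n hn hne
    have hn' := Finset.mem_Icc.mp hn
    have hj : 1 ≤ k - n := Nat.sub_pos_of_lt (lt_of_le_of_ne hn'.2 hne)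
    have h1 : (star T * T) * ((star T) ^ (k - n) * T ^ (k - n))
        = (star T) ^ (k - n) * T ^ (k - n) := by
      simpa only [pow_one] using e_mul_e T hT hj
    have h2 : (star T * T) * ((star T) ^ (k - n + 1) * T ^ (k - n + 1))
        = (star T) ^ (k - n + 1) * T ^ (k - n + 1) := by
      simpa only [pow_one] using e_mul_e T hT (hj.trans (Nat.le_succ _))
    have hz : (1 - star T * T) *
        ((star T) ^ (k - n) * T ^ (k - n) - (star T) ^ (k - n + 1) * T ^ (k - n + 1)) = 0 := by
      calc (1 - star T * T) *
            ((star T) ^ (k - n) * T ^ (k - n) - (star T) ^ (k - n + 1) * T ^ (k - n + 1))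
          = (star T) ^ (k - n) * T ^ (k - n) - (star T) ^ (k - n + 1) * T ^ (k - n + 1)
            - ((star T * T) * ((star T) ^ (k - n) * T ^ (k - n))
              - (star T * T) * ((star T) ^ (k - n + 1) * T ^ (k - n + 1))) := by noncomm_ring
        _ = 0 := by rw [h1, h2]; abel
    rw [← mul_assoc, hz, zero_mul]

lemma comm_sub (m j : ℕ) :
    (1 - T * star T) * ((star T) ^ m * T ^ m - (star T) ^ j * T ^ j)
      = ((star T) ^ m * T ^ m - (star T) ^ j * T ^ j) * (1 - T * star T) := by
  have c1 := ef_comm T hT m 1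
  have c2 := ef_comm T hT j 1
  simp only [pow_one] at c1 c2
  calc (1 - T * star T) * ((star T) ^ m * T ^ m - (star T) ^ j * T ^ j)
      = (star T) ^ m * T ^ m - (star T) ^ j * T ^ j
        - ((T * star T) * ((star T) ^ m * T ^ m) - (T * star T) * ((star T) ^ j * T ^ j)) := by
        noncomm_ring
    _ = (star T) ^ m * T ^ m - (star T) ^ j * T ^ j
        - (((star T) ^ m * T ^ m) * (T * star T) - ((star T) ^ j * T ^ j) * (T * star T)) := by
        rw [← c1, ← c2]
    _ = ((star T) ^ m * T ^ m - (star T) ^ j * T ^ j) * (1 - T * star T) := by noncomm_ring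

lemma main2 (k : ℕ) (hk : 1 ≤ k) :
    (1 - T * star T) *
        ∑ n ∈ Finset.Icc 1 k,
          ((star T) ^ (k - n) * T ^ (k - n) - (star T) ^ (k - n + 1) * T ^ (k - n + 1)) *
            (T ^ (n - 1) * (star T) ^ (n - 1) - T ^ n * (star T) ^ n)
      = ((star T) ^ (k - 1) * T ^ (k - 1) - (star T) ^ k * T ^ k) * (1 - T * star T) := by
  have hF : T * star T * (T * star T) = T * star T := by
    simpa only [pow_one] using f_mul_f T hT (le_refl 1)
  have hFF : (1 - T * star T) * (1 - T * star T) = 1 - T * star T := by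
    calc (1 - T * star T) * (1 - T * star T)
        = 1 - T * star T - T * star T + T * star T * (T * star T) := by noncomm_ring
      _ = 1 - T * star T := by rw [hF]; abel
  rw [Finset.mul_sum, Finset.sum_eq_single_of_mem 1 (Finset.mem_Icc.mpr ⟨le_refl 1, hk⟩)]
  · rw [Nat.sub_add_cancel hk]
    simp only [Nat.sub_self, pow_zero, pow_one, one_mul]
    rw [← mul_assoc, comm_sub T hT (k - 1) k, mul_assoc, hFF]
  · intro n hn hne
    have hn' := Finset.mem_Icc.mp hn
    have hj : 1 ≤ n - 1 := Nat.sub_pos_of_lt (lt_of_le_of_ne hn'.1 (Ne.symm hne))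
    have g1 : (T * star T) * (T ^ (n - 1) * (star T) ^ (n - 1))
        = T ^ (n - 1) * (star T) ^ (n - 1) := by
      simpa only [pow_one] using f_mul_f T hT hj
    have g2 : (T * star T) * (T ^ n * (star T) ^ n) = T ^ n * (star T) ^ n := by
      simpa only [pow_one] using f_mul_f T hT hn'.1
    have hz : (1 - T * star T) *
        (T ^ (n - 1) * (star T) ^ (n - 1) - T ^ n * (star T) ^ n) = 0 := by
      calc (1 - T * star T) * (T ^ (n - 1) * (star T) ^ (n - 1) - T ^ n * (star T) ^ n)
          = T ^ (n - 1) * (star T) ^ (n - 1) - T ^ n * (star T) ^ n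
            - ((T * star T) * (T ^ (n - 1) * (star T) ^ (n - 1))
              - (T * star T) * (T ^ n * (star T) ^ n)) := by noncomm_ring
        _ = 0 := by rw [g1, g2]; abel
    rw [← mul_assoc, comm_sub T hT (k - n) (k - n + 1), mul_assoc, hz, mul_zero]

end Main

/-- Let `T` be a power partial isometry with initial projections
`E j = T^{*j} T^j` and final projections `F j = T^j T^{*j}`, and let
`P_{H_k} = ∑_{n=1}^k (E_{k-n} - E_{k-n+1})(F_{n-1} - F_n)` be the projection onto
the truncated shift summand of index `k` in the Halmos–Wallen decomposition.
Then the defect space of `T_k = T|_{H_k}`, namely the range of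
`(E_0 - E_1) P_{H_k}`, equals the range of `(E_0 - E_1)(F_{k-1} - F_k)`, and the
defect space of `T_k^*`, namely the range of `(F_0 - F_1) P_{H_k}`, equals the
range of `(E_{k-1} - E_k)(F_0 - F_1)`. -/
theorem truncated_shift_defect_spaces
    {H : Type*} [NormedAddCommGroup H] [InnerProductSpace ℂ H] [CompleteSpace H]
    (T : H →L[ℂ] H)
    (hT : ∀ n : ℕ, 1 ≤ n → (T ^ n) * adjoint (T ^ n) * (T ^ n) = T ^ n)
    (k : ℕ) (hk : 1 ≤ k) :
    (Set.range
        ⇑((1 - adjoint T * T) *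
          ∑ n ∈ Finset.Icc 1 k,
            (((adjoint T) ^ (k - n) * T ^ (k - n)) -
              ((adjoint T) ^ (k - n + 1) * T ^ (k - n + 1))) *
            ((T ^ (n - 1) * (adjoint T) ^ (n - 1)) - (T ^ n * (adjoint T) ^ n)))
      = Set.range
          ⇑((1 - adjoint T * T) *
            ((T ^ (k - 1) * (adjoint T) ^ (k - 1)) - (T ^ k * (adjoint T) ^ k))))
    ∧
    (Set.range
        ⇑((1 - T * adjoint T) *
          ∑ n ∈ Finset.Icc 1 k,
            (((adjoint T) ^ (k - n) * T ^ (k - n)) -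
              ((adjoint T) ^ (k - n + 1) * T ^ (k - n + 1))) *
            ((T ^ (n - 1) * (adjoint T) ^ (n - 1)) - (T ^ n * (adjoint T) ^ n)))
      = Set.range
          ⇑((((adjoint T) ^ (k - 1) * T ^ (k - 1)) - ((adjoint T) ^ k * T ^ k)) *
            (1 - T * adjoint T))) := by
  simp only [← ContinuousLinearMap.star_eq_adjoint]
  have hT' : ∀ n : ℕ, T ^ n * (star T) ^ n * T ^ n = T ^ n := by
    intro n
    cases n with
    | zero => simp
    | succ m =>
      have h := hT (m + 1) (Nat.succ_le_succ (Nat.zero_le m))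
      rwa [← ContinuousLinearMap.star_eq_adjoint, star_pow] at h
  exact ⟨by rw [main1 T hT' k hk], by rw [main2 T hT' k hk]⟩
end

section
/- Let T be a power partial isometry on H. Then the characteristic function of T is given by Θ_T(z) = [∑_{k=1}^∞ P_{H_k} T^{*(k−1)} z^k] restricted to D_T, where P_{H_k} is the orthogonal projection onto the index-k truncated shift space H_k in the Halmos–Wallen decomposition; moreover each coefficient P_{H_k} T^{*(k−1)} restricted to D_T is a partial isometry. -/
/-!
Write `S = T⋆`, `E j = S ^ j * T ^ j` and `F j = T ^ j * S ^ j`. For a power partial isometry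
these are commuting projections which intertwine with `S`: `E j * S = S * E (j - 1)` and
`F j * S = S * F (j + 1)`. Up to adjoints and exchanging `T` with `S`, both are
`T * E (j + 1) = E j * T`, which is forced by the C⋆-identity: the four products
`star x * y` with `x, y ∈ {T * E (j + 1), E j * T}` all equal `E (j + 1)`, so
`‖T * E (j + 1) - E j * T‖² = 0`.

Pushing `S ^ k` through the summands of `P_{H_{k+1}}` kills all of them but the first, leaving
`P_{H_{k+1}} S^k D_T = S^k (1 - F (k + 1)) D_T = D_{T⋆} S^k D_T`. These are the Taylor
coefficients of `Θ_T(z) D_T = z D_{T⋆} (1 - z S)⁻¹ D_T` (as `T D_T = 0`). Finally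
`S^k (1 - F (k + 1)) D_T` is the partial isometry `S^k` times a projection commuting with
`(S^k)⋆ S^k = F k`, hence a partial isometry.
-/

open ContinuousLinearMap

variable {H : Type*} [NormedAddCommGroup H] [InnerProductSpace ℂ H] [CompleteSpace H]

/-- The orthogonal projection onto the index-`k` truncated shift summand `H_k`
in the Halmos–Wallen decomposition of a power partial isometry `T`:
`P_{H_k} = ∑_{n=1}^k (E_{k-n} - E_{k-n+1})(F_{n-1} - F_n)`, where
`E j = T^{*j} T^j` and `F j = T^j T^{*j}`. -/
noncomputable def halmosWallenProj (T : H →L[ℂ] H) (k : ℕ) : H →L[ℂ] H :=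
  ∑ n ∈ Finset.Icc 1 k,
    (((adjoint T) ^ (k - n) * T ^ (k - n)) -
      ((adjoint T) ^ (k - n + 1) * T ^ (k - n + 1))) *
    ((T ^ (n - 1) * (adjoint T) ^ (n - 1)) - (T ^ n * (adjoint T) ^ n))

variable {A : Type*}

def IsPartialIsometry [Mul A] [Star A] (a : A) : Prop :=
  a * star a * a = a

def IsPowerPartialIsometry [Monoid A] [Star A] (a : A) : Prop :=
  ∀ n : ℕ, IsPartialIsometry (a ^ n)

theorem CStarRing.eq_of_star_mul_eq [NonUnitalNormedRing A] [StarRing A] [CStarRing A]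
    {x y p : A} (hxx : star x * x = p) (hxy : star x * y = p) (hyx : star y * x = p)
    (hyy : star y * y = p) : x = y := by
  rw [← sub_eq_zero, ← CStarRing.star_mul_self_eq_zero_iff, star_sub, sub_mul, mul_sub, mul_sub,
    hxx, hxy, hyx, hyy, sub_self]

namespace IsPartialIsometry

section Semigroup

variable [Semigroup A] [StarMul A] {a : A} (ha : IsPartialIsometry a)
include ha

protected theorem star : IsPartialIsometry (star a) := by
  simpa only [IsPartialIsometry, star_mul, star_star, ← mul_assoc] using congr(star $ha)

theorem isStarProjection_star_mul_self : IsStarProjection (star a * a) where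
  isIdempotentElem := by rw [IsIdempotentElem, mul_assoc, ← mul_assoc a, ha]
  isSelfAdjoint := .star_mul_self a

theorem isStarProjection_mul_star_self : IsStarProjection (a * star a) := by
  simpa only [star_star] using ha.star.isStarProjection_star_mul_self

theorem mul_of_commute {q : A} (hq : IsStarProjection q) (hqa : Commute q (star a * a)) :
    IsPartialIsometry (a * q) := by
  have hqq : q * q = q := hq.isIdempotentElem
  calc a * q * star (a * q) * (a * q) = a * (q * q) * (star a * a) * q := by
        rw [star_mul, hq.isSelfAdjoint.star_eq]; simp only [mul_assoc]
    _ = a * star a * a * (q * q) := by rw [hqq, mul_assoc a q, hqa.eq]; simp only [mul_assoc, hqq]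
    _ = a * q := by rw [ha, hqq]

end Semigroup

theorem norm_le_one [NonUnitalNormedRing A] [StarRing A] [CStarRing A] {a : A}
    (ha : IsPartialIsometry a) : ‖a‖ ≤ 1 := by
  have hsq : ‖a‖ * ‖a‖ ≤ 1 := by
    rw [← CStarRing.norm_star_mul_self]
    exact ha.isStarProjection_star_mul_self.norm_le
  nlinarith [norm_nonneg a]

theorem hasSum_smul_defect_mul_star_pow_mul_defect [NormedRing A] [StarRing A]
    [CStarRing A] [NormedAlgebra ℂ A] [CompleteSpace A] {a : A} (ha : IsPartialIsometry a)
    {z : ℂ} (hz : ‖z‖ < 1) :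
    HasSum (fun k : ℕ => z ^ (k + 1) • ((1 - a * star a) * star a ^ k * (1 - star a * a)))
      ((-a + z • ((1 - a * star a) * Ring.inverse (1 - z • star a) * (1 - star a * a))) *
        (1 - star a * a)) := by
  have hzs : ‖z • star a‖ < 1 := (norm_smul_le z (star a)).trans_lt
    (mul_lt_one_of_nonneg_of_lt_one_left (norm_nonneg z) hz ha.star.norm_le_one)
  have hD : (1 - star a * a) * (1 - star a * a) = 1 - star a * a :=
    ha.isStarProjection_star_mul_self.one_sub.isIdempotentElem
  have haD : a * (1 - star a * a) = 0 := by rw [mul_sub, mul_one, ← mul_assoc, ha, sub_self]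
  have hterm (k : ℕ) : z • (1 - a * star a) * (z • star a) ^ k * (1 - star a * a) =
      z ^ (k + 1) • ((1 - a * star a) * star a ^ k * (1 - star a * a)) := by
    rw [smul_pow, pow_succ', mul_smul_comm, smul_mul_assoc, smul_mul_assoc, smul_mul_assoc,
      smul_smul, mul_comm]
  rw [add_mul, neg_mul, haD, neg_zero, zero_add, smul_mul_assoc, mul_assoc _ (1 - star a * a), hD,
    ← smul_mul_assoc, ← smul_mul_assoc]
  simpa only [hterm] using
    ((hasSum_geom_series_inverse _ hzs).mul_left (z • (1 - a * star a))).mul_right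
      (1 - star a * a)

end IsPartialIsometry

namespace IsPowerPartialIsometry

section Monoid

variable [Monoid A] [StarMul A] {a : A} (ha : IsPowerPartialIsometry a)
include ha

theorem isPartialIsometry : IsPartialIsometry a := by
  simpa only [pow_one] using ha 1

protected theorem star : IsPowerPartialIsometry (star a) := fun n => by
  simpa only [star_pow] using (ha n).star

theorem isStarProjection_star_pow_mul_pow (n : ℕ) : IsStarProjection (star a ^ n * a ^ n) := by
  simpa only [star_pow] using (ha n).isStarProjection_star_mul_self

theorem isStarProjection_pow_mul_star_pow (n : ℕ) : IsStarProjection (a ^ n * star a ^ n) := by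
  simpa only [star_pow] using (ha n).isStarProjection_mul_star_self

theorem pow_mul_star_pow_mul_pow (n : ℕ) : a ^ n * star a ^ n * a ^ n = a ^ n := by
  rw [← star_pow]; exact ha n

theorem commute_pow_mul_star_pow_succ (m : ℕ) :
    Commute (a ^ m * star a ^ m) (a ^ (m + 1) * star a ^ (m + 1)) := by
  have hF := (ha.isStarProjection_pow_mul_star_pow (m + 1)).isSelfAdjoint.star_eq
  have hF₀ := (ha.isStarProjection_pow_mul_star_pow m).isSelfAdjoint.star_eq
  have h : a ^ m * star a ^ m * (a ^ (m + 1) * star a ^ (m + 1)) =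
      a ^ (m + 1) * star a ^ (m + 1) := by
    rw [pow_succ a m, ← mul_assoc, ← mul_assoc, ha.pow_mul_star_pow_mul_pow]
  rw [Commute, SemiconjBy, h]
  simpa only [star_mul, hF, hF₀] using congr(star $h).symm

end Monoid

section CStarRing

variable [NormedRing A] [StarRing A] [CStarRing A] {a : A} (ha : IsPowerPartialIsometry a)
include ha

theorem mul_star_pow_succ_mul_pow_succ (j : ℕ) :
    a * (star a ^ (j + 1) * a ^ (j + 1)) = star a ^ j * a ^ j * a := by
  have hE₀ := ha.isStarProjection_star_pow_mul_pow j
  have hE₁ := ha.isStarProjection_star_pow_mul_pow (j + 1)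
  have hconj : star a * (star a ^ j * a ^ j) * a = star a ^ (j + 1) * a ^ (j + 1) := by
    rw [pow_succ', pow_succ]; simp only [mul_assoc]
  have hinit : star a ^ (j + 1) * a ^ (j + 1) * (star a * a) = star a ^ (j + 1) * a ^ (j + 1) := by
    rw [mul_assoc, pow_succ a j, mul_assoc, ← mul_assoc a, ha.isPartialIsometry]
  set E₀ := star a ^ j * a ^ j
  set E₁ := star a ^ (j + 1) * a ^ (j + 1)
  clear_value E₀ E₁
  have hE₀E₀ : E₀ * E₀ = E₀ := hE₀.isIdempotentElem
  have hE₁E₁ : E₁ * E₁ = E₁ := hE₁.isIdempotentElem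
  apply CStarRing.eq_of_star_mul_eq (p := E₁) <;>
    simp only [star_mul, hE₀.isSelfAdjoint.star_eq, hE₁.isSelfAdjoint.star_eq]
  · rw [mul_assoc, ← mul_assoc (star a), ← mul_assoc, hinit, hE₁E₁]
  · rw [mul_assoc, ← mul_assoc (star a), hconj, hE₁E₁]
  · rw [← mul_assoc, hconj, hE₁E₁]
  · rw [mul_assoc, ← mul_assoc E₀, hE₀E₀, ← mul_assoc, hconj]

theorem star_pow_succ_mul_pow_succ_mul_star (j : ℕ) :
    star a ^ (j + 1) * a ^ (j + 1) * star a = star a * (star a ^ j * a ^ j) := by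
  simpa only [star_mul, star_pow, star_star, mul_assoc] using
    congr(star $(ha.mul_star_pow_succ_mul_pow_succ j))

theorem star_pow_mul_pow_mul_star (j : ℕ) :
    star a ^ j * a ^ j * star a = star a * (star a ^ (j - 1) * a ^ (j - 1)) := by
  cases j with
  | zero => simp
  | succ j => exact ha.star_pow_succ_mul_pow_succ_mul_star j

theorem star_pow_mul_pow_mul_star_pow (j m : ℕ) :
    star a ^ j * a ^ j * star a ^ m = star a ^ m * (star a ^ (j - m) * a ^ (j - m)) := by
  induction m generalizing j with
  | zero => simp
  | succ m ih =>
    rw [pow_succ', ← mul_assoc, ha.star_pow_mul_pow_mul_star, mul_assoc, ih, ← mul_assoc,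
      ← pow_succ', Nat.sub_sub, Nat.add_comm 1 m]

theorem pow_mul_star_pow_mul_star (j : ℕ) :
    a ^ j * star a ^ j * star a = star a * (a ^ (j + 1) * star a ^ (j + 1)) := by
  simpa only [star_star] using (ha.star.mul_star_pow_succ_mul_pow_succ j).symm

theorem pow_mul_star_pow_mul_star_pow (j m : ℕ) :
    a ^ j * star a ^ j * star a ^ m = star a ^ m * (a ^ (j + m) * star a ^ (j + m)) := by
  induction m generalizing j with
  | zero => simp
  | succ m ih =>
    rw [pow_succ', ← mul_assoc, ha.pow_mul_star_pow_mul_star, mul_assoc, ih, ← mul_assoc,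
      ← pow_succ', Nat.add_assoc, Nat.add_comm 1 m]

theorem commute_star_pow_mul_pow_pow_mul_star_pow (j k : ℕ) :
    Commute (star a ^ j * a ^ j) (a ^ k * star a ^ k) := by
  induction k generalizing j with
  | zero => simp
  | succ k ih =>
    have hF : a ^ (k + 1) * star a ^ (k + 1) = a * (a ^ k * star a ^ k) * star a := by
      rw [pow_succ' a, pow_succ (star a)]; simp only [mul_assoc]
    rw [hF, Commute, SemiconjBy]
    calc star a ^ j * a ^ j * (a * (a ^ k * star a ^ k) * star a)
        = star a ^ j * a ^ j * a * (a ^ k * star a ^ k) * star a := by simp only [mul_assoc]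
      _ = a * ((star a ^ (j + 1) * a ^ (j + 1)) * (a ^ k * star a ^ k)) * star a := by
          rw [← ha.mul_star_pow_succ_mul_pow_succ]; simp only [mul_assoc]
      _ = a * (a ^ k * star a ^ k) * (star a ^ (j + 1) * a ^ (j + 1) * star a) := by
          rw [(ih (j + 1)).eq]; simp only [mul_assoc]
      _ = a * (a ^ k * star a ^ k) * star a * (star a ^ j * a ^ j) := by
          rw [ha.star_pow_succ_mul_pow_succ_mul_star]; simp only [mul_assoc]

theorem one_sub_mul_star_mul_star_pow (m : ℕ) :
    (1 - a * star a) * star a ^ m = star a ^ m * (1 - a ^ (m + 1) * star a ^ (m + 1)) := by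
  have := ha.pow_mul_star_pow_mul_star_pow 1 m
  rw [pow_one, pow_one, Nat.add_comm] at this
  rw [sub_mul, one_mul, this, mul_sub, mul_one]

theorem isPartialIsometry_one_sub_mul_star_mul_star_pow_mul_one_sub (m : ℕ) :
    IsPartialIsometry ((1 - a * star a) * star a ^ m * (1 - star a * a)) := by
  have hF := ha.isStarProjection_pow_mul_star_pow (m + 1)
  have hE := ha.isPartialIsometry.isStarProjection_star_mul_self
  have hEF : Commute (star a * a) (a ^ (m + 1) * star a ^ (m + 1)) := by
    simpa only [pow_one] using ha.commute_star_pow_mul_pow_pow_mul_star_pow 1 (m + 1)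
  have hEF₀ : Commute (star a * a) (a ^ m * star a ^ m) := by
    simpa only [pow_one] using ha.commute_star_pow_mul_pow_pow_mul_star_pow 1 m
  rw [ha.one_sub_mul_star_mul_star_pow, mul_assoc]
  refine (ha.star m).mul_of_commute (hF.one_sub.mul hE.one_sub ?_) ?_
  · exact (Commute.one_right _).sub_right ((Commute.one_left _).sub_left hEF.symm)
  · rw [star_pow, star_star]
    exact ((Commute.one_left _).sub_left (ha.commute_pow_mul_star_pow_succ m).symm).mul_left
      ((Commute.one_left _).sub_left hEF₀)

end CStarRing

section HalmosWallen

variable {T : H →L[ℂ] H} (hT : IsPowerPartialIsometry T)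
include hT

theorem halmosWallenProj_succ_mul_star_pow (m : ℕ) :
    halmosWallenProj T (m + 1) * star T ^ m =
      star T ^ m * ((1 - star T * T) * (T ^ m * star T ^ m - T ^ (m + 1) * star T ^ (m + 1))) := by
  have hE (i j : ℕ) : (star T ^ i * T ^ i - star T ^ j * T ^ j) * star T ^ m =
      star T ^ m * (star T ^ (i - m) * T ^ (i - m) - star T ^ (j - m) * T ^ (j - m)) := by
    rw [sub_mul, hT.star_pow_mul_pow_mul_star_pow, hT.star_pow_mul_pow_mul_star_pow, mul_sub]
  have hF (i j : ℕ) : (T ^ i * star T ^ i - T ^ j * star T ^ j) * star T ^ m =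
      star T ^ m * (T ^ (i + m) * star T ^ (i + m) - T ^ (j + m) * star T ^ (j + m)) := by
    rw [sub_mul, hT.pow_mul_star_pow_mul_star_pow, hT.pow_mul_star_pow_mul_star_pow, mul_sub]
  rw [halmosWallenProj, ← star_eq_adjoint, Finset.sum_mul,
    Finset.sum_congr rfl fun n _ => by rw [mul_assoc, hF, ← mul_assoc, hE, mul_assoc],
    Finset.sum_eq_single_of_mem 1 (by simp)]
  · simp [Nat.add_comm 1 m]
  · intro n hn hn1
    obtain ⟨h1, h2⟩ := Finset.mem_Icc.mp hn
    rw [show m + 1 - n - m = 0 by omega, show m + 1 - n + 1 - m = 0 by omega, sub_self,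
      zero_mul, mul_zero]

theorem halmosWallenProj_succ_mul_star_pow_mul_one_sub (m : ℕ) :
    halmosWallenProj T (m + 1) * star T ^ m * (1 - star T * T) =
      (1 - T * star T) * star T ^ m * (1 - star T * T) := by
  have hD : (1 - star T * T) * (1 - star T * T) = 1 - star T * T :=
    hT.isPartialIsometry.isStarProjection_star_mul_self.one_sub.isIdempotentElem
  have hDF : Commute (1 - star T * T) (T ^ m * star T ^ m - T ^ (m + 1) * star T ^ (m + 1)) := by
    simpa only [pow_one] using ((Commute.one_left _).sub_left
      (hT.commute_star_pow_mul_pow_pow_mul_star_pow 1 m)).sub_right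
      ((Commute.one_left _).sub_left (hT.commute_star_pow_mul_pow_pow_mul_star_pow 1 (m + 1)))
  have hSF : star T ^ m * (T ^ m * star T ^ m) = star T ^ m := by
    simpa only [star_star, mul_assoc] using hT.star.pow_mul_star_pow_mul_pow m
  rw [hT.halmosWallenProj_succ_mul_star_pow, hT.one_sub_mul_star_mul_star_pow, mul_assoc, mul_assoc,
    ← mul_assoc (1 - star T * T), hDF.eq, mul_assoc, hD, ← mul_assoc, mul_sub (star T ^ m), hSF,
    mul_sub (star T ^ m) 1, mul_one]

end HalmosWallen

end IsPowerPartialIsometry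

/-- The characteristic function of a power partial isometry `T` is
`Θ_T(z) = (∑_{k ≥ 1} P_{H_k} T^{*(k-1)} z^k)|_{D_T}`, where
`Θ_T(z) = (-T + z D_{T^*} (I - z T^*)⁻¹ D_T)|_{D_T}` with `D_T = I - T^* T` and
`D_{T^*} = I - T T^*` (projections, as `T` is a partial isometry), and the
restriction to the defect space `D_T` is implemented by composing with the
projection `I - T^* T`.  Moreover each coefficient `P_{H_k} T^{*(k-1)}|_{D_T}`
is a partial isometry. -/
theorem characteristic_function_of_power_partial_isometry
    (T : H →L[ℂ] H)
    (hT : ∀ n : ℕ, 1 ≤ n → (T ^ n) * adjoint (T ^ n) * (T ^ n) = T ^ n) :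
    (∀ z : ℂ, ‖z‖ < 1 → ∀ x : H,
      HasSum
        (fun k : ℕ =>
          z ^ (k + 1) •
            (halmosWallenProj T (k + 1)) (((adjoint T) ^ k) ((1 - adjoint T * T) x)))
        (((-T + z • ((1 - T * adjoint T) *
            Ring.inverse (1 - z • adjoint T) * (1 - adjoint T * T)))
          * (1 - adjoint T * T)) x)) ∧
    (∀ k : ℕ, 1 ≤ k →
      (halmosWallenProj T k * (adjoint T) ^ (k - 1) * (1 - adjoint T * T)) *
        adjoint (halmosWallenProj T k * (adjoint T) ^ (k - 1) * (1 - adjoint T * T)) *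
        (halmosWallenProj T k * (adjoint T) ^ (k - 1) * (1 - adjoint T * T))
      = halmosWallenProj T k * (adjoint T) ^ (k - 1) * (1 - adjoint T * T)) := by
  have hT' : IsPowerPartialIsometry T := fun n => by
    rcases Nat.eq_zero_or_pos n with rfl | hn
    · simp [IsPartialIsometry]
    · simpa only [IsPartialIsometry, star_eq_adjoint] using hT n hn
  simp only [← star_eq_adjoint]
  refine ⟨fun z hz x => ?_, fun k hk => ?_⟩
  · have := (hT'.isPartialIsometry.hasSum_smul_defect_mul_star_pow_mul_defect hz).mapL
      (apply ℂ H x)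
    simpa [← hT'.halmosWallenProj_succ_mul_star_pow_mul_one_sub] using this
  · obtain ⟨m, rfl⟩ := Nat.exists_eq_add_of_le' hk
    rw [Nat.add_sub_cancel, hT'.halmosWallenProj_succ_mul_star_pow_mul_one_sub]
    exact hT'.isPartialIsometry_one_sub_mul_star_mul_star_pow_mul_one_sub m
end

section
/- Let Φ ∈ L^∞_{B(E,E*)} be nonzero such that the Toeplitz operator T_Φ : H²_E → H²_{E*} is a partial isometry. Then the orthogonal complement of the kernel of T_Φ, [ker T_Φ]^⊥ = {f ∈ H²_E : ‖T_Φ f‖ = ‖f‖}, is invariant under multiplication by z. -/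
open ContinuousLinearMap

local notation "⟪" x ", " y "⟫" => @inner ℂ _ _ x y

/-- An operator on `ℓ²` vanishing on all `lp.single`s is zero. -/
lemma clm_eq_zero_of_single {E G : Type*} [NormedAddCommGroup E] [InnerProductSpace ℂ E]
    [NormedAddCommGroup G] [NormedSpace ℂ G]
    (T : lp (fun _ : ℕ => E) 2 →L[ℂ] G)
    (h : ∀ (n : ℕ) (a : E), T (lp.single 2 n a) = 0) : T = 0 := by
  ext x
  have hx : HasSum (fun n : ℕ => lp.single 2 n (x n)) x :=
    lp.hasSum_single ENNReal.ofNat_ne_top x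
  have h2 : HasSum (fun n : ℕ => T (lp.single 2 n (x n))) (T x) := T.hasSum hx
  simp only [h] at h2
  simpa using h2.unique hasSum_zero

lemma shift_isometry {E : Type*} [NormedAddCommGroup E] [InnerProductSpace ℂ E]
    [CompleteSpace E]
    (Mz : lp (fun _ : ℕ => E) 2 →L[ℂ] lp (fun _ : ℕ => E) 2)
    (hMz : ∀ (n : ℕ) (a : E), Mz (lp.single 2 n a) = lp.single 2 (n + 1) a)
    (x : lp (fun _ : ℕ => E) 2) : ‖Mz x‖ = ‖x‖ := by
  have key : adjoint Mz ∘L Mz = ContinuousLinearMap.id ℂ _ := by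
    have h0 : (adjoint Mz ∘L Mz) - ContinuousLinearMap.id ℂ _ = 0 := by
      apply clm_eq_zero_of_single
      intro n a
      have hz : ∀ y : lp (fun _ : ℕ => E) 2,
          (∀ (m : ℕ) (b : E), ⟪y, lp.single 2 m b⟫ = 0) → y = 0 := by
        intro y hy
        ext m
        have := hy m (y m)
        rw [lp.inner_single_right] at this
        simpa [inner_self_eq_zero] using this
      apply hz
      intro m b
      simp only [ContinuousLinearMap.sub_apply, ContinuousLinearMap.coe_comp',
        Function.comp_apply, ContinuousLinearMap.id_apply, inner_sub_left]
      rw [adjoint_inner_left, hMz, hMz, lp.inner_single_left, lp.inner_single_left]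
      rcases eq_or_ne n m with rfl | hne
      · simp [lp.single_apply_self]
      · rw [lp.single_apply_ne _ _ _ (by omega : (n:ℕ)+1 ≠ m+1),
          lp.single_apply_ne _ _ _ hne]
        simp
    have := sub_eq_zero.mp h0
    exact this
  have : ⟪Mz x, Mz x⟫ = ⟪x, x⟫ := by
    rw [← adjoint_inner_left]
    have : adjoint Mz (Mz x) = x := congrArg (fun T => T x) key
    rw [this]
  have h2 := congrArg (RCLike.re : ℂ →+ ℝ) this
  rw [norm_eq_sqrt_re_inner (𝕜 := ℂ) (Mz x), norm_eq_sqrt_re_inner (𝕜 := ℂ) x]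
  rw [h2]

lemma partial_isometry_contraction {E F : Type*}
    [NormedAddCommGroup E] [InnerProductSpace ℂ E] [CompleteSpace E]
    [NormedAddCommGroup F] [InnerProductSpace ℂ F] [CompleteSpace F]
    (A : E →L[ℂ] F) (hpi : A ∘L adjoint A ∘L A = A) (x : E) : ‖A x‖ ≤ ‖x‖ := by
  have hAAA : A ((adjoint A) (A x)) = A x := by
    have := congrArg (fun T => T x) hpi
    simpa using this
  have h1 : ‖A x‖ ^ 2 = RCLike.re ⟪(adjoint A ∘L A) x, x⟫ :=
    apply_norm_sq_eq_inner_adjoint_left A x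
  have h2 : ‖(adjoint A ∘L A) x‖ = ‖A x‖ := by
    have hin : ⟪(adjoint A) (A x), (adjoint A) (A x)⟫ = ⟪A x, A x⟫ := by
      rw [adjoint_inner_left, hAAA]
    have := congrArg (RCLike.re : ℂ →+ ℝ) hin
    rw [norm_eq_sqrt_re_inner (𝕜 := ℂ) ((adjoint A ∘L A) x), norm_eq_sqrt_re_inner (𝕜 := ℂ) (A x)]
    simp only [ContinuousLinearMap.coe_comp', Function.comp_apply]
    rw [this]
  have h3 : RCLike.re ⟪(adjoint A ∘L A) x, x⟫ ≤ ‖(adjoint A ∘L A) x‖ * ‖x‖ :=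
    le_trans (RCLike.re_le_norm _) (norm_inner_le_norm _ _)
  rw [h2] at h3
  nlinarith [norm_nonneg (A x), norm_nonneg x]


/-- If `T_Φ : H²_E → H²_{E_*}` is a nonzero partially isometric Toeplitz
operator (here `H²_E` is modelled as `ℓ²(ℕ, E)` and the shifts `M_z` are
characterized by their action on monomials `lp.single 2 n a`), then the
orthogonal complement of its kernel, `{f : ‖T_Φ f‖ = ‖f‖}`, is invariant under
multiplication by `z`. -/
theorem kernel_complement_shift_invariant
    {E F : Type*} [NormedAddCommGroup E] [InnerProductSpace ℂ E] [CompleteSpace E]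
    [NormedAddCommGroup F] [InnerProductSpace ℂ F] [CompleteSpace F]
    (MzE : lp (fun _ : ℕ => E) 2 →L[ℂ] lp (fun _ : ℕ => E) 2)
    (MzF : lp (fun _ : ℕ => F) 2 →L[ℂ] lp (fun _ : ℕ => F) 2)
    (hMzE : ∀ (n : ℕ) (a : E), MzE (lp.single 2 n a) = lp.single 2 (n + 1) a)
    (hMzF : ∀ (n : ℕ) (a : F), MzF (lp.single 2 n a) = lp.single 2 (n + 1) a)
    (A : lp (fun _ : ℕ => E) 2 →L[ℂ] lp (fun _ : ℕ => F) 2)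
    (hA0 : A ≠ 0)
    (hToeplitz : adjoint MzF ∘L A ∘L MzE = A)
    (hpi : A ∘L adjoint A ∘L A = A) :
    ∀ f : lp (fun _ : ℕ => E) 2, ‖A f‖ = ‖f‖ → ‖A (MzE f)‖ = ‖MzE f‖ := by
  intro f hf
  have hEiso := shift_isometry MzE hMzE
  have hFiso := shift_isometry MzF hMzF
  have hFnorm : ‖MzF‖ ≤ 1 := by
    refine ContinuousLinearMap.opNorm_le_bound _ zero_le_one fun y => ?_
    rw [hFiso y, one_mul]
  have hadjnorm : ‖adjoint MzF‖ ≤ 1 := by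
    rwa [ContinuousLinearMap.adjoint.norm_map MzF]
  have hle : ‖A (MzE f)‖ ≤ ‖MzE f‖ := partial_isometry_contraction A hpi (MzE f)
  have hge : ‖MzE f‖ ≤ ‖A (MzE f)‖ := by
    have h1 : ‖f‖ = ‖(adjoint MzF) (A (MzE f))‖ := by
      rw [← hf]
      congr 1
      conv_lhs => rw [← hToeplitz]
      rfl
    have h2 : ‖(adjoint MzF) (A (MzE f))‖ ≤ ‖adjoint MzF‖ * ‖A (MzE f)‖ :=
      ContinuousLinearMap.le_opNorm _ _
    have h3 : ‖adjoint MzF‖ * ‖A (MzE f)‖ ≤ 1 * ‖A (MzE f)‖ :=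
      mul_le_mul_of_nonneg_right hadjnorm (norm_nonneg _)
    rw [hEiso f]
    linarith [h1, h2, h3]
  linarith
end

section
/- Let Θ ∈ H^∞_{B(F,E*)} and Ψ ∈ H^∞_{B(F,E)} be inner functions with Taylor coefficients θ_m and ψ_m satisfying θ_m ψ_n* = 0 for all m, n ≥ 1. Then T_Φ := T_Θ T_Ψ* is a partially isometric Toeplitz operator from H²_E to H²_{E*} (i.e., T_Φ is a partial isometry and satisfies M_z* T_Φ M_z = T_Φ). -/
open ContinuousLinearMap

local notation "⟪" x ", " y "⟫" => @inner ℂ _ _ x y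

section Aux

variable {E F : Type*}
  [NormedAddCommGroup E] [InnerProductSpace ℂ E]
  [NormedAddCommGroup F] [InnerProductSpace ℂ F]

/-- inner product of two singles in ℓ² -/
lemma lp_inner_single_single (k i : ℕ) (b x : E) :
    ⟪lp.single 2 k b, (lp.single 2 i x : lp (fun _ : ℕ => E) 2)⟫
      = if i = k then ⟪b, x⟫ else 0 := by
  rw [lp.inner_single_left]
  rcases eq_or_ne i k with h | h
  · subst h
    rw [if_pos rfl, lp.single_apply_self]
  · rw [if_neg h, lp.single_apply_ne _ _ _ h.symm, inner_zero_right]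

/-- elements of ℓ² are determined by inner products against singles -/
lemma lp_ext_inner_single {u v : lp (fun _ : ℕ => E) 2}
    (h : ∀ (k : ℕ) (b : E), ⟪lp.single 2 k b, u⟫ = ⟪lp.single 2 k b, v⟫) : u = v := by
  apply lp.ext
  funext k
  refine ext_inner_left ℂ fun b => ?_
  have := h k b
  rwa [lp.inner_single_left, lp.inner_single_left] at this

/-- operators on ℓ² are determined by their values on singles -/
lemma lp_clm_ext_single {X : Type*} [NormedAddCommGroup X] [NormedSpace ℂ X]
    {A B : lp (fun _ : ℕ => E) 2 →L[ℂ] X}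
    (h : ∀ (n : ℕ) (a : E), A (lp.single 2 n a) = B (lp.single 2 n a)) : A = B := by
  ext x
  have hx := lp.hasSum_single (E := fun _ : ℕ => E) (p := 2) (by norm_num) x
  have hA := hx.mapL A
  have hB := hx.mapL B
  simp only [h] at hA
  exact hA.unique hB

/-- matrix entries of an analytic Toeplitz operator -/
lemma lp_entry {W : Type*} [NormedAddCommGroup W] [InnerProductSpace ℂ W]
    (θ : ℕ → W →L[ℂ] F)
    (TΘ : lp (fun _ : ℕ => W) 2 →L[ℂ] lp (fun _ : ℕ => F) 2)
    (hTΘ : ∀ (n : ℕ) (a : W),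
      HasSum (fun m : ℕ => lp.single 2 (n + m) (θ m a)) (TΘ (lp.single 2 n a)))
    (k : ℕ) (b : F) (j : ℕ) (c : W) :
    ⟪lp.single 2 k b, TΘ (lp.single 2 j c)⟫ = if j ≤ k then ⟪b, θ (k - j) c⟫ else 0 := by
  have h1 := (hTΘ j c).mapL (innerSL ℂ (lp.single 2 k b))
  simp only [innerSL_apply_apply, lp_inner_single_single] at h1
  by_cases hjk : j ≤ k
  · rw [if_pos hjk]
    refine h1.unique ?_
    have : (fun m : ℕ => if j + m = k then ⟪b, θ m c⟫ else 0)
        = fun m : ℕ => if m = k - j then ⟪b, θ (k - j) c⟫ else 0 := by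
      funext m
      rcases eq_or_ne m (k - j) with hm | hm
      · subst hm
        rw [if_pos (by omega), if_pos rfl]
      · rw [if_neg (by omega), if_neg hm]
    rw [this]
    exact hasSum_ite_eq _ _
  · rw [if_neg hjk]
    refine h1.unique ?_
    have : (fun m : ℕ => if j + m = k then ⟪b, θ m c⟫ else 0) = fun _ : ℕ => (0 : ℂ) := by
      funext m
      rw [if_neg (by omega)]
    rw [this]
    exact hasSum_zero

end Aux

set_option maxHeartbeats 1000000 in
/-- Let `Θ ∈ H^∞(F, E_*)` and `Ψ ∈ H^∞(F, E)` be inner functions (so the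
analytic Toeplitz operators `T_Θ`, `T_Ψ` are isometries intertwining the
shifts, acting on monomials by `T_Θ (a z^n) = ∑_m θ m a z^{n+m}`) whose Taylor
coefficients satisfy `θ m ψ n ^* = 0` for all `m, n ≥ 1`.  Then
`T_Φ := T_Θ T_Ψ^*` is a partially isometric Toeplitz operator from `H²_E` to
`H²_{E_*}`. -/
theorem product_of_inner_is_partially_isometric_Toeplitz
    {W E F : Type*}
    [NormedAddCommGroup W] [InnerProductSpace ℂ W] [CompleteSpace W]
    [NormedAddCommGroup E] [InnerProductSpace ℂ E] [CompleteSpace E]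
    [NormedAddCommGroup F] [InnerProductSpace ℂ F] [CompleteSpace F]
    (θ : ℕ → W →L[ℂ] F) (ψ : ℕ → W →L[ℂ] E)
    (MzE : lp (fun _ : ℕ => E) 2 →L[ℂ] lp (fun _ : ℕ => E) 2)
    (MzF : lp (fun _ : ℕ => F) 2 →L[ℂ] lp (fun _ : ℕ => F) 2)
    (hMzE : ∀ (n : ℕ) (a : E), MzE (lp.single 2 n a) = lp.single 2 (n + 1) a)
    (hMzF : ∀ (n : ℕ) (a : F), MzF (lp.single 2 n a) = lp.single 2 (n + 1) a)
    (TΘ : lp (fun _ : ℕ => W) 2 →L[ℂ] lp (fun _ : ℕ => F) 2)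
    (TΨ : lp (fun _ : ℕ => W) 2 →L[ℂ] lp (fun _ : ℕ => E) 2)
    (hTΘ : ∀ (n : ℕ) (a : W),
      HasSum (fun m : ℕ => lp.single 2 (n + m) (θ m a)) (TΘ (lp.single 2 n a)))
    (hTΨ : ∀ (n : ℕ) (a : W),
      HasSum (fun m : ℕ => lp.single 2 (n + m) (ψ m a)) (TΨ (lp.single 2 n a)))
    (hΘinner : adjoint TΘ ∘L TΘ = ContinuousLinearMap.id ℂ _)
    (hΨinner : adjoint TΨ ∘L TΨ = ContinuousLinearMap.id ℂ _)
    (hcoeff : ∀ m n : ℕ, 1 ≤ m → 1 ≤ n → θ m ∘L adjoint (ψ n) = 0) :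
    ((TΘ ∘L adjoint TΨ) ∘L adjoint (TΘ ∘L adjoint TΨ) ∘L (TΘ ∘L adjoint TΨ)
        = TΘ ∘L adjoint TΨ) ∧
    (adjoint MzF ∘L (TΘ ∘L adjoint TΨ) ∘L MzE = TΘ ∘L adjoint TΨ) := by
  have hθid : ∀ y, adjoint TΘ (TΘ y) = y := fun y => by
    simpa using ContinuousLinearMap.ext_iff.mp hΘinner y
  have hψid : ∀ y, adjoint TΨ (TΨ y) = y := fun y => by
    simpa using ContinuousLinearMap.ext_iff.mp hΨinner y
  constructor
  · ext x
    simp only [comp_apply, adjoint_comp, adjoint_adjoint]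
    rw [hθid, hψid]
  · -- the Toeplitz property
    -- first: the adjoint of TΨ on singles
    have hadj : ∀ (n : ℕ) (a : E), adjoint TΨ (lp.single 2 n a)
        = ∑ j ∈ Finset.range (n + 1), lp.single 2 j ((adjoint (ψ (n - j))) a) := by
      intro n a
      apply lp_ext_inner_single
      intro k c
      rw [adjoint_inner_right,
        show (⟪TΨ (lp.single 2 k c), lp.single 2 n a⟫)
            = starRingEnd ℂ ⟪lp.single 2 n a, TΨ (lp.single 2 k c)⟫ from
          (inner_conj_symm _ _).symm,
        lp_entry ψ TΨ hTΨ n a k c, inner_sum]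
      simp only [lp_inner_single_single]
      rw [Finset.sum_ite_eq' (Finset.range (n + 1)) k
        (fun j => ⟪c, (adjoint (ψ (n - j))) a⟫)]
      by_cases hk : k ≤ n
      · rw [if_pos hk, if_pos (Finset.mem_range.mpr (by omega)), inner_conj_symm,
          adjoint_inner_right]
      · rw [if_neg hk, map_zero, if_neg (by simp only [Finset.mem_range]; omega)]
    -- the matrix entries of TΦ
    have hTΦ : ∀ (n : ℕ) (a : E) (k : ℕ) (b : F),
        ⟪lp.single 2 k b, TΘ (adjoint TΨ (lp.single 2 n a))⟫
          = ∑ j ∈ Finset.range (n + 1),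
            (if j ≤ k then ⟪b, θ (k - j) ((adjoint (ψ (n - j))) a)⟫ else 0) := by
      intro n a k b
      rw [hadj, map_sum, inner_sum]
      simp only [lp_entry θ TΘ hTΘ]
    apply lp_clm_ext_single
    intro n a
    apply lp_ext_inner_single
    intro k b
    rw [comp_apply, comp_apply, comp_apply, hMzE, adjoint_inner_right, hMzF, comp_apply]
    rw [hTΦ (n + 1) a (k + 1) b, hTΦ n a k b]
    rw [Finset.sum_range_succ']
    have h0 : (if 0 ≤ k + 1 then ⟪b, θ (k + 1 - 0) ((adjoint (ψ (n + 1 - 0))) a)⟫ else 0)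
        = 0 := by
      rw [if_pos (by omega)]
      have := hcoeff (k + 1) (n + 1) (by omega) (by omega)
      have h2 : θ (k + 1) ((adjoint (ψ (n + 1))) a) = 0 := by
        have := ContinuousLinearMap.ext_iff.mp this a
        simpa using this
      simp [h2]
    rw [h0, add_zero]
    refine Finset.sum_congr rfl fun j _ => ?_
    have e1 : k + 1 - (j + 1) = k - j := by omega
    have e2 : n + 1 - (j + 1) = n - j := by omega
    rw [e1, e2]
    congr 1
    simp [Nat.add_le_add_iff_right]
end
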